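/- Let π = ⟨a, b, c ∣ a², abab⁻², acac⁻²⟩ and let Π = ℤ[π]. If h ∈ Π satisfies h(a−1) = 0, h(−b²a + ba + b − 1) = 0 and h(−c²a + ca + c − 1) = 0, then h = 0. -/

import Mathlib

/-- The relators a², abab⁻², acac⁻² in the free group on three generators a, b, c. -/
def piRels : Set (FreeGroup (Fin 3)) :=
  {(FreeGroup.of 0) ^ 2,
   FreeGroup.of 0 * FreeGroup.of 1 * FreeGroup.of 0 * (FreeGroup.of 1)⁻¹ * (FreeGroup.of 1)⁻¹,
   FreeGroup.of 0 * FreeGroup.of 2 * FreeGroup.of 0 * (FreeGroup.of 2)⁻¹ * (FreeGroup.of 2)⁻¹}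

/-- π = ⟨a, b, c ∣ a², abab⁻², acac⁻²⟩. -/
abbrev piGroup := PresentedGroup piRels

/-- The integral group ring Π = ℤ[π]. -/
abbrev ZPi := MonoidAlgebra ℤ piGroup

/-- The canonical inclusion of group elements in the group ring. -/
noncomputable def og (g : piGroup) : ZPi := MonoidAlgebra.of ℤ piGroup g

/-- a, b, c as elements of Π. -/
noncomputable def aa : ZPi := og (PresentedGroup.of 0)
noncomputable def bb : ZPi := og (PresentedGroup.of 1)
noncomputable def cc : ZPi := og (PresentedGroup.of 2)

/-!
Since `a² = 1` and `aba = b²`, we have `b²a = ab`, so `h(a - 1) = 0` turns the second and third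
equations into `h b = h` and `h c = h`. Hence `h` is fixed by right multiplication by `bc`, which
has infinite order in `π`: it maps to `!![1, 1; 1, 2]` in `GL₂(ℤ)`. A finitely supported function
on a group that is invariant under right translation by an element of infinite order vanishes.
-/

namespace MonoidAlgebra

theorem eq_zero_of_mul_single_one_eq_self {R M : Type*} [Semiring R] [CancelMonoid M]
    {x : MonoidAlgebra R M} {m : M} (hm : ¬IsOfFinOrder m) (hx : x * single m 1 = x) :
    x = 0 := by
  have hshift : ∀ (m' : M) (n : ℕ), x.coeff (m' * m ^ n) = x.coeff m' := by
    intro m' n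
    induction n with
    | zero => rw [pow_zero, mul_one]
    | succ n ih =>
      rw [pow_succ, ← mul_assoc, ← ih]
      nth_rw 1 [← hx]
      rw [coeff_mul_single_mul, mul_one]
  by_contra hne
  obtain ⟨m', hm'⟩ := Finsupp.support_nonempty_iff.2 (mt coeff_eq_zero.1 hne)
  have hinj : Function.Injective (fun n : ℕ => m' * m ^ n) :=
    (mul_right_injective m').comp (injective_pow_iff_not_isOfFinOrder.2 hm)
  have hm'0 : x.coeff m' ≠ 0 := Finsupp.mem_support_iff.1 hm'
  exact Set.infinite_of_injective_forall_mem (s := (x.coeff.support : Set M)) hinj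
    (fun n => by simpa [hshift] using hm'0) x.coeff.support.finite_toSet

end MonoidAlgebra

theorem not_isOfFinOrder_matrix_one_one_one_two :
    ¬IsOfFinOrder (!![1, 1; 1, 2] : Matrix (Fin 2) (Fin 2) ℤ) := by
  have hgrowth : ∀ n : ℕ, (n : ℤ) ≤ ((!![1, 1; 1, 2] : Matrix (Fin 2) (Fin 2) ℤ) ^ n) 0 1 ∧
      1 ≤ ((!![1, 1; 1, 2] : Matrix (Fin 2) (Fin 2) ℤ) ^ n) 1 1 := by
    intro n
    induction n with
    | zero => simp
    | succ n ih =>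
      simp only [pow_succ', Matrix.mul_apply, Fin.sum_univ_two, Matrix.of_apply, Matrix.cons_val',
        Matrix.cons_val_zero, Matrix.cons_val_one, Matrix.cons_val_fin_one, one_mul]
      push_cast
      omega
  rw [isOfFinOrder_iff_pow_eq_one]
  rintro ⟨n, hn, hMn⟩
  have h01 := (hgrowth n).1
  rw [hMn, Matrix.one_apply_ne (by decide)] at h01
  omega

theorem sq_mul_eq_mul_of_mul_self_eq_one {G : Type*} [Group G] {a b : G} (ha : a * a = 1)
    (hab : a * b * a * b⁻¹ * b⁻¹ = 1) : b ^ 2 * a = a * b := by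
  have haba : a * b * a = b ^ 2 := by
    rwa [mul_inv_eq_one, mul_inv_eq_iff_eq_mul, ← pow_two] at hab
  rw [← haba, mul_assoc (a * b), ha, mul_one]

theorem mul_eq_self_of_mul_theta_eq_zero {R : Type*} [Ring R] {h a b : R} (ha : a * a = 1)
    (hab : b ^ 2 * a = a * b) (h1 : h * (a - 1) = 0)
    (h2 : h * (-(b ^ 2 * a) + b * a + b - 1) = 0) : h * b = h := by
  have hha : h * a = h := by rwa [mul_sub, mul_one, sub_eq_zero] at h1
  have hhb2a : h * (b ^ 2 * a) = h * b := by rw [hab, ← mul_assoc, hha]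
  have hhba : h * (b * a) = h := by
    rw [mul_sub, mul_add, mul_add, mul_neg, hhb2a, mul_one] at h2
    exact sub_eq_zero.1 (by rw [← h2]; abel)
  calc h * b = h * (b * a) * a := by rw [mul_assoc, mul_assoc, ha, mul_one]
    _ = h := by rw [hhba, hha]

namespace piGroup

open PresentedGroup

theorem of_zero_mul_self : (of 0 : piGroup) * of 0 = 1 := by
  rw [← pow_two]
  exact (map_pow (mk piRels) _ 2).symm.trans (one_of_mem (by simp [piRels]))

theorem of_sq_mul_of_zero {i : Fin 3} (hi : i = 1 ∨ i = 2) :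
    (of i : piGroup) ^ 2 * of 0 = of 0 * of i := by
  refine sq_mul_eq_mul_of_mul_self_eq_one of_zero_mul_self ?_
  have hrel := one_of_mem (rels := piRels)
    (x := FreeGroup.of 0 * FreeGroup.of i * FreeGroup.of 0 * (FreeGroup.of i)⁻¹ *
      (FreeGroup.of i)⁻¹)
    (by rcases hi with rfl | rfl <;> simp [piRels])
  rwa [map_mul, map_mul, map_mul, map_mul, map_inv] at hrel

def glGen : Fin 3 → GL (Fin 2) ℤ :=
  ![⟨!![0, 1; 1, 0], !![0, 1; 1, 0], by decide, by decide⟩,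
    ⟨!![0, -1; 1, -1], !![-1, 1; -1, 0], by decide, by decide⟩,
    ⟨!![0, 1; -1, -1], !![-1, -1; 1, 0], by decide, by decide⟩]

def toGL : piGroup →* GL (Fin 2) ℤ :=
  toGroup (f := glGen) <| by
    rintro r (rfl | rfl | rfl) <;>
    · simp only [map_mul, map_inv, map_pow, FreeGroup.lift_apply_of, glGen]
      ext : 1
      simp only [Units.val_mul, Units.val_pow_eq_pow_val, Units.val_one]
      decide

theorem toGL_of_one_mul_of_two :
    (toGL (of 1 * of 2) : Matrix (Fin 2) (Fin 2) ℤ) = !![1, 1; 1, 2] := by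
  simp only [map_mul, toGL, toGroup.of, Units.val_mul, glGen]
  decide

theorem not_isOfFinOrder_of_one_mul_of_two : ¬IsOfFinOrder (of 1 * of 2 : piGroup) := fun h =>
  not_isOfFinOrder_matrix_one_one_one_two <|
    toGL_of_one_mul_of_two ▸ Units.isOfFinOrder_val.2 (toGL.isOfFinOrder h)

end piGroup

theorem aa_mul_aa : aa * aa = 1 := by
  rw [aa, og, ← map_mul, piGroup.of_zero_mul_self, map_one]

theorem og_of_sq_mul_aa {i : Fin 3} (hi : i = 1 ∨ i = 2) :
    og (PresentedGroup.of i) ^ 2 * aa = aa * og (PresentedGroup.of i) := by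
  simp only [aa, og, ← map_pow, ← map_mul, piGroup.of_sq_mul_of_zero hi]

/-- If h ∈ Π = ℤ[π] satisfies h(a−1) = 0, h(−b²a + ba + b − 1) = 0 and
h(−c²a + ca + c − 1) = 0, then h = 0. -/
theorem annihilator_of_theta_trivial (h : ZPi)
    (h1 : h * (aa - 1) = 0)
    (h2 : h * (-(bb ^ 2 * aa) + bb * aa + bb - 1) = 0)
    (h3 : h * (-(cc ^ 2 * aa) + cc * aa + cc - 1) = 0) :
    h = 0 := by
  have hb : h * bb = h :=
    mul_eq_self_of_mul_theta_eq_zero aa_mul_aa (og_of_sq_mul_aa (.inl rfl)) h1 h2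
  have hc : h * cc = h :=
    mul_eq_self_of_mul_theta_eq_zero aa_mul_aa (og_of_sq_mul_aa (.inr rfl)) h1 h3
  refine MonoidAlgebra.eq_zero_of_mul_single_one_eq_self
    piGroup.not_isOfFinOrder_of_one_mul_of_two ?_
  calc h * MonoidAlgebra.single (PresentedGroup.of 1 * PresentedGroup.of 2) 1 = h * bb * cc := by
        rw [mul_assoc, bb, cc, og, og, ← map_mul, MonoidAlgebra.of_apply]
    _ = h := by rw [hb, hc]
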